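/- arXiv:2110.09280 — 2 statements merged into one kernel-verified Lean document; each statement's English description precedes it below -/
import Mathlib

section
/- Let (X, r) be a non-degenerate involutive set-theoretic solution of the Yang–Baxter equation. For every integer k ≥ 1 and all x, y ∈ X, the word Ψ_k(x)·y in X^{k+1} (the concatenation of Ψ_k(x) with the single letter y) lies in the same orbit as the word σ_{Ψ_k(x)}(y)·Ψ_k(τ_y(x)), i.e. O(Ψ_k(x)y) = O(σ_{Ψ_k(x)}(y) Ψ_k(τ_y(x))). -/
/-! Set-theoretic solutions of the Yang–Baxter equation.
For `r : X × X → X × X` we write `r (i, j) = (σ i j, τ j i)`, i.e. `σ_i(j) = σ i j` and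
`τ_j(i) = τ j i`. -/

variable {X : Type*}

/-- The map `r : X × X → X × X` determined by families `σ`, `τ` via
`r (i, j) = (σ_i(j), τ_j(i))`. -/
def rmapF (σ τ : X → X → X) : X × X → X × X := fun p => (σ p.1 p.2, τ p.2 p.1)

/-- `r × id` on `X × X × X`. -/
def ridF (r : X × X → X × X) : X × X × X → X × X × X :=
  fun p => ((r (p.1, p.2.1)).1, (r (p.1, p.2.1)).2, p.2.2)

/-- `id × r` on `X × X × X`. -/
def idrF (r : X × X → X × X) : X × X × X → X × X × X := fun p => (p.1, r p.2)

/-- The braid (Yang–Baxter) equation `(r × id) ∘ (id × r) ∘ (r × id) = (id × r) ∘ (r × id) ∘ (id × r)`. -/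
def BraidEq (r : X × X → X × X) : Prop :=
  ridF r ∘ idrF r ∘ ridF r = idrF r ∘ ridF r ∘ idrF r

/-- A non-degenerate involutive set-theoretic solution of the Yang–Baxter equation on `X`:
the maps `σ_i` and `τ_i` are bijective (packaged as equivalences), the induced map
`r (i, j) = (σ_i(j), τ_j(i))` satisfies the braid equation, and `r ∘ r = id`
(which in particular makes `r` bijective). -/
structure NDIS (X : Type*) where
  σ : X → X ≃ X
  τ : X → X ≃ X
  braid : BraidEq (rmapF (fun i => ⇑(σ i)) (fun i => ⇑(τ i)))
  invol : ∀ p : X × X,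
    rmapF (fun i => ⇑(σ i)) (fun i => ⇑(τ i))
      (rmapF (fun i => ⇑(σ i)) (fun i => ⇑(τ i)) p) = p

namespace NDIS

/-- The map `r` of the solution. -/
def r (S : NDIS X) : X × X → X × X := rmapF (fun i => ⇑(S.σ i)) (fun i => ⇑(S.τ i))

/-- The diagonal `D : X → X`, `D(i) = τ_i⁻¹(i)`. -/
def D (S : NDIS X) : X → X := fun i => (S.τ i).symm i

end NDIS
namespace NDIS

/-- One elementary move on words: apply `r` to two adjacent letters. -/
def Step (S : NDIS X) (x y : List X) : Prop :=
  ∃ (u v : List X) (i j : X), x = u ++ i :: j :: v ∧ y = u ++ S.σ i j :: S.τ j i :: v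

/-- The orbit `O(x)` of a word `x` under the equivalence relation generated by the
adjacent `r`-moves (equivalently, the orbit of the induced `S_n`-action on `X^n`). -/
def Orb (S : NDIS X) (x : List X) : Set (List X) := {y | Relation.EqvGen S.Step x y}

/-- `Ψ_k(a) = (D^{k−1}(a), …, D(a), a)`. -/
def Psi (S : NDIS X) (k : ℕ) (a : X) : List X :=
  (List.range k).map fun t => S.D^[k - 1 - t] a

/-- The inverse of the diagonal `D`. -/
noncomputable def Dinv (S : NDIS X) [Nonempty X] : X → X := Function.invFun S.D

/-- `Ψ_{−k}(a) = (a, D^{−1}(a), …, D^{−(k−1)}(a))`. -/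
noncomputable def PsiNeg (S : NDIS X) [Nonempty X] (k : ℕ) (a : X) : List X :=
  (List.range k).map fun t => S.Dinv^[t] a

/-- `σ_x = σ_{a_1} ∘ σ_{a_2} ∘ ⋯ ∘ σ_{a_k}` for a word `x = (a_1, …, a_k)`. -/
def sigmaWord (S : NDIS X) (x : List X) (z : X) : X := x.foldr (fun a w => S.σ a w) z

/-- `τ_x = τ_{a_k} ∘ ⋯ ∘ τ_{a_2} ∘ τ_{a_1}` for a word `x = (a_1, …, a_k)`. -/
def tauWord (S : NDIS X) (x : List X) (z : X) : X := x.foldl (fun w a => S.τ a w) z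

/-- The concatenation `Ψ_{L 0}(a 0) Ψ_{L 1}(a 1) ⋯ Ψ_{L (k-1)}(a (k-1))`. -/
def word (S : NDIS X) {k : ℕ} (L : Fin k → ℕ) (a : Fin k → X) : List X :=
  (List.ofFn fun t => S.Psi (L t) (a t)).flatten

/-- The concatenation `Ψ_{L (i+1)}(a (i+1)) ⋯ Ψ_{L (j-1)}(a (j-1))` of the blocks strictly
between positions `i` and `j` (the empty word when `j = i + 1`). -/
def midword (S : NDIS X) {k : ℕ} (L : Fin k → ℕ) (a : Fin k → X) (i j : Fin k) : List X :=
  (((List.ofFn fun t => S.Psi (L t) (a t)).drop ((i : ℕ) + 1)).take ((j : ℕ) - (i : ℕ) - 1)).flatten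

/-- The family `a` yields a `λ`-element: `a_j ≠ D^{−λ_j}(τ_w(a_i))` for all `i < j`, with
`w = Ψ_{λ_{i+1}}(a_{i+1}) ⋯ Ψ_{λ_{j−1}}(a_{j−1})`. -/
def IsLambdaFamily (S : NDIS X) [Nonempty X] {k : ℕ} (L : Fin k → ℕ) (a : Fin k → X) : Prop :=
  ∀ i j : Fin k, i < j →
    a j ≠ S.Dinv^[L j] (S.tauWord (S.midword L a i j) (a i))

/-- `x` is a `λ`-element for the partition with positive parts `L 0 ≥ L 1 ≥ ⋯ ≥ L (k-1) > 0`. -/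
def IsLambdaWord (S : NDIS X) [Nonempty X] {k : ℕ} (L : Fin k → ℕ) (x : List X) : Prop :=
  ∃ a : Fin k → X, x = S.word L a ∧ S.IsLambdaFamily L a

/-- The bijection `b` of `X^n` applying `r` to the entries in (0-based) positions `j` and
`j + 1` and fixing all other entries. -/
def bmap (S : NDIS X) {n : ℕ} (j : ℕ) (hj : j + 1 < n) (x : Fin n → X) : Fin n → X :=
  fun t =>
    if (t : ℕ) = j then S.σ (x ⟨j, by omega⟩) (x ⟨j + 1, hj⟩)
    else if (t : ℕ) = j + 1 then S.τ (x ⟨j + 1, hj⟩) (x ⟨j, by omega⟩)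
    else x t

/-- One elementary move on `X^n` (as functions `Fin n → X`). -/
def StepF (S : NDIS X) {n : ℕ} (x y : Fin n → X) : Prop :=
  ∃ (j : ℕ) (hj : j + 1 < n), y = S.bmap j hj x

end NDIS

/-- The offset `λ_1 + ⋯ + λ_i` of the `i`-th block (0-based). -/
def blockOffset {k : ℕ} (L : Fin k → ℕ) (i : Fin k) : ℕ :=
  ∑ t ∈ Finset.univ.filter (fun t => t < i), L t

/-- A `(λ_1, …, λ_k)`-shuffle: a permutation strictly increasing on each consecutive block. -/
def IsShuffle {k n : ℕ} (L : Fin k → ℕ) (θ : Equiv.Perm (Fin n)) : Prop :=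
  ∀ (i : Fin k) (p q : Fin n), blockOffset L i ≤ (p : ℕ) → p < q →
    (q : ℕ) < blockOffset L i + L i → θ p < θ q

section Aux

variable {X : Type*} (S : NDIS X)

lemma tau_braid_aux (i j k : X) :
    S.τ k (S.τ j i) = S.τ (S.τ k j) (S.τ (S.σ j k) i) := by
  have h := congrFun S.braid (i, j, k)
  have h3 := congrArg (fun p : X × X × X => p.2.2) h
  simpa [BraidEq, ridF, idrF, rmapF] using h3

lemma tau_sigma_D_aux (a b : X) :
    S.τ (S.σ a b) (S.D a) = S.D (S.τ b a) := by
  have hD : S.τ a (S.D a) = a := (S.τ a).apply_symm_apply a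
  have h := tau_braid_aux S (S.D a) a b
  rw [hD] at h
  -- h : S.τ b a = S.τ (S.τ b a) (S.τ (S.σ a b) (S.D a))
  have := congrArg (S.τ (S.τ b a)).symm h
  rw [Equiv.symm_apply_apply] at this
  rw [← this]
  rfl

lemma Psi_succ_aux (k : ℕ) (x : X) :
    S.Psi (k + 1) x = S.D^[k] x :: S.Psi k x := by
  simp only [NDIS.Psi, List.range_succ_eq_map, List.map_cons, List.map_map]
  congr 1
  apply List.map_congr_left
  intro t ht
  show S.D^[k + 1 - 1 - (t + 1)] x = S.D^[k - 1 - t] x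
  rw [show k + 1 - 1 - (t + 1) = k - 1 - t from by omega]

lemma sigmaWord_psi_tau_aux (k : ℕ) (x y : X) :
    S.τ (S.sigmaWord (S.Psi k x) y) (S.D^[k] x) = S.D^[k] (S.τ y x) := by
  induction k generalizing y with
  | zero => simp [NDIS.Psi, NDIS.sigmaWord]
  | succ k ih =>
    rw [Psi_succ_aux]
    have hs : S.sigmaWord (S.D^[k] x :: S.Psi k x) y
        = S.σ (S.D^[k] x) (S.sigmaWord (S.Psi k x) y) := rfl
    rw [hs, Function.iterate_succ_apply', Function.iterate_succ_apply',
      tau_sigma_D_aux, ih]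

lemma step_cons_aux {u v : List X} (a : X) (h : S.Step u v) :
    S.Step (a :: u) (a :: v) := by
  obtain ⟨p, q, i, j, hu, hv⟩ := h
  exact ⟨a :: p, q, i, j, by simp [hu], by simp [hv]⟩

lemma eqvGen_cons_aux {u v : List X} (a : X)
    (h : Relation.EqvGen S.Step u v) :
    Relation.EqvGen S.Step (a :: u) (a :: v) := by
  induction h with
  | rel x y hxy => exact Relation.EqvGen.rel _ _ (step_cons_aux S a hxy)
  | refl x => exact Relation.EqvGen.refl _
  | symm x y _ ih => exact Relation.EqvGen.symm _ _ ih
  | trans x y z _ _ ih1 ih2 => exact Relation.EqvGen.trans _ _ _ ih1 ih2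

lemma orb_eq_of_eqvGen_aux {u v : List X} (h : Relation.EqvGen S.Step u v) :
    S.Orb u = S.Orb v := by
  ext w
  constructor
  · intro hw
    exact Relation.EqvGen.trans _ _ _ (Relation.EqvGen.symm _ _ h) hw
  · intro hw
    exact Relation.EqvGen.trans _ _ _ h hw

lemma main_eqvGen_aux (k : ℕ) (x y : X) :
    Relation.EqvGen S.Step (S.Psi k x ++ [y])
      (S.sigmaWord (S.Psi k x) y :: S.Psi k (S.τ y x)) := by
  induction k generalizing x y with
  | zero =>
    simp only [NDIS.Psi, List.range_zero, List.map_nil, List.nil_append,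
      NDIS.sigmaWord, List.foldr_nil]
    exact Relation.EqvGen.refl _
  | succ k ih =>
    rw [Psi_succ_aux, Psi_succ_aux]
    have h1 : Relation.EqvGen S.Step
        (S.D^[k] x :: (S.Psi k x ++ [y]))
        (S.D^[k] x :: (S.sigmaWord (S.Psi k x) y :: S.Psi k (S.τ y x))) :=
      eqvGen_cons_aux S _ (ih x y)
    have h2 : S.Step
        (S.D^[k] x :: S.sigmaWord (S.Psi k x) y :: S.Psi k (S.τ y x))
        (S.σ (S.D^[k] x) (S.sigmaWord (S.Psi k x) y) ::
          S.τ (S.sigmaWord (S.Psi k x) y) (S.D^[k] x) :: S.Psi k (S.τ y x)) :=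
      ⟨[], S.Psi k (S.τ y x), _, _, rfl, rfl⟩
    have hs : S.sigmaWord (S.D^[k] x :: S.Psi k x) y
        = S.σ (S.D^[k] x) (S.sigmaWord (S.Psi k x) y) := rfl
    rw [hs]
    refine Relation.EqvGen.trans _ _ _ (by simpa using h1) ?_
    have h3 := Relation.EqvGen.rel _ _ h2
    rwa [sigmaWord_psi_tau_aux] at h3

end Aux

/-- For a non-degenerate involutive solution `(X, r)`, every `k ≥ 1` and all
`x, y ∈ X`: `O(Ψ_k(x)·y) = O(σ_{Ψ_k(x)}(y)·Ψ_k(τ_y(x)))`. -/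
theorem orbit_exchange_single {X : Type*} (S : NDIS X) (k : ℕ) (hk : 1 ≤ k) (x y : X) :
    S.Orb (S.Psi k x ++ [y]) =
      S.Orb (S.sigmaWord (S.Psi k x) y :: S.Psi k (S.τ y x)) := by
  exact orb_eq_of_eqvGen_aux S (main_eqvGen_aux S k x y)
end

section
/- Let (X, r) be a non-degenerate involutive set-theoretic solution of the Yang–Baxter equation with |X| = m ≥ 2, and let λ = (λ_1, …, λ_k) ∈ P(n, m) have λ_i = λ_{i+1} = l > 0 for some 1 ≤ i ≤ k−1. Let x = Ψ_{λ_1}(a_1) Ψ_{λ_2}(a_2) ⋯ Ψ_{λ_k}(a_k) be a λ-element, and let x′ be the word obtained from x by replacing the two consecutive blocks Ψ_l(a_i) Ψ_l(a_{i+1}) by Ψ_{−l}(σ_{Ψ_l(a_i)}(D^{l−1}(a_{i+1}))) Ψ_l(τ_{Ψ_l(a_{i+1})}(a_i)). Then x′ is again a λ-element and x′ ∈ O(x). -/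
/-! Set-theoretic solutions of the Yang–Baxter equation.
For `r : X × X → X × X` we write `r (i, j) = (σ i j, τ j i)`, i.e. `σ_i(j) = σ i j` and
`τ_j(i) = τ j i`. -/

variable {X : Type*}

/-!
Pushing a letter `z` leftwards through a block gives `Ψ_l(a) z ∼ σ_{Ψ_l(a)}(z) Ψ_l(τ_z(a))`.
Pushing the letters of `Ψ_l(a_{i+1})` one at a time through `Ψ_l(a_i)`, the letters that come
out form `Ψ_{−l}(σ_{Ψ_l(a_i)}(D^{l−1}(a_{i+1})))`, so `x′ ∈ O(x)`. As `Ψ_{−l}(c) = Ψ_l(D^{1−l}(c))`,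
the exchanged blocks are `Ψ_l(b_i) Ψ_l(b_{i+1})`, and since `σ_w`, `τ_w` only depend on the orbit
of `w`, the new heads satisfy identities such as `τ_{Ψ_l(b_{i+1})}(b_i) = a_{i+1}`. With these,
each inequality required of `(b_t)` follows from the one for `(a_t)` at the pair of positions
with `i` and `i + 1` interchanged.
-/
namespace NDIS

variable (S : NDIS X)

lemma sigma_sigma_tau (x y : X) : S.σ (S.σ x y) (S.τ y x) = x :=
  congrArg Prod.fst (S.invol (x, y))

lemma tau_tau_sigma (x y : X) : S.τ (S.τ y x) (S.σ x y) = y :=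
  congrArg Prod.snd (S.invol (x, y))

lemma sigma_braid (x y z : X) : S.σ (S.σ x y) (S.σ (S.τ y x) z) = S.σ x (S.σ y z) :=
  congrArg Prod.fst (congrFun S.braid (x, y, z))

lemma tau_braid (x y z : X) : S.τ (S.τ z y) (S.τ (S.σ y z) x) = S.τ z (S.τ y x) :=
  (congrArg (fun p => p.2.2) (congrFun S.braid (x, y, z))).symm

@[simp] lemma tau_D (a : X) : S.τ a (S.D a) = a := Equiv.apply_symm_apply _ _

lemma sigma_eq_self_iff (u v : X) : S.σ u v = u ↔ S.D v = u := by
  refine ⟨fun h => ?_, ?_⟩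
  · have h' := S.sigma_sigma_tau u v
    rw [h] at h'
    exact (Equiv.symm_apply_eq _).2 ((S.σ u).injective (h'.trans h.symm)).symm
  · rintro rfl
    have h := S.tau_tau_sigma (S.D v) v
    rw [tau_D] at h
    exact (S.τ v).injective (h.trans (S.tau_D v).symm)

lemma sigma_D_self (a : X) : S.σ (S.D a) a = S.D a := (S.sigma_eq_self_iff _ _).2 rfl

lemma D_surjective : Function.Surjective S.D :=
  fun u => ⟨(S.σ u).symm u, (S.sigma_eq_self_iff _ _).1 (Equiv.apply_symm_apply _ _)⟩

lemma D_injective : Function.Injective S.D := fun _ w h =>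
  (S.σ (S.D w)).injective (((S.sigma_eq_self_iff _ _).2 h).trans (S.sigma_D_self w).symm)

lemma tau_sigma_D (a z : X) : S.τ (S.σ a z) (S.D a) = S.D (S.τ z a) :=
  (Equiv.eq_symm_apply _).2 (by rw [tau_braid, tau_D])

lemma tau_D_sigma (x y : X) : S.τ x (S.D (S.σ x y)) = S.D y := by
  simpa only [sigma_sigma_tau, tau_tau_sigma] using S.tau_sigma_D (S.σ x y) (S.τ y x)

lemma D_sigma_tau_D (x y : X) : S.D (S.σ (S.τ (S.D y) x) y) = S.σ x (S.D y) :=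
  (S.sigma_eq_self_iff _ _).1 (by rw [sigma_braid, sigma_D_self])

section Dinv

variable [Nonempty X]

@[simp] lemma D_Dinv (a : X) : S.D (S.Dinv a) = a := Function.rightInverse_invFun S.D_surjective a

@[simp] lemma Dinv_D (a : X) : S.Dinv (S.D a) = a := Function.leftInverse_invFun S.D_injective a

@[simp] lemma D_iterate_Dinv_iterate (n : ℕ) (a : X) : S.D^[n] (S.Dinv^[n] a) = a :=
  Function.LeftInverse.iterate S.D_Dinv n a

@[simp] lemma Dinv_iterate_D_iterate (n : ℕ) (a : X) : S.Dinv^[n] (S.D^[n] a) = a :=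
  Function.LeftInverse.iterate S.Dinv_D n a

lemma Dinv_iterate_eq_iff {n : ℕ} {x y : X} : S.Dinv^[n] x = y ↔ x = S.D^[n] y := by
  constructor <;> rintro rfl <;> simp

lemma sigma_Dinv (a : X) : S.σ a (S.Dinv a) = a := (S.sigma_eq_self_iff _ _).2 (S.D_Dinv a)

end Dinv

@[simp] lemma sigmaWord_nil (z : X) : S.sigmaWord [] z = z := rfl

@[simp] lemma sigmaWord_cons (c : X) (w : List X) (z : X) :
    S.sigmaWord (c :: w) z = S.σ c (S.sigmaWord w z) := rfl

@[simp] lemma sigmaWord_append (u v : List X) (z : X) :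
    S.sigmaWord (u ++ v) z = S.sigmaWord u (S.sigmaWord v z) :=
  List.foldr_append ..

@[simp] lemma tauWord_nil (z : X) : S.tauWord [] z = z := rfl

@[simp] lemma tauWord_cons (c : X) (w : List X) (z : X) :
    S.tauWord (c :: w) z = S.tauWord w (S.τ c z) := rfl

@[simp] lemma tauWord_append (u v : List X) (z : X) :
    S.tauWord (u ++ v) z = S.tauWord v (S.tauWord u z) :=
  List.foldl_append ..

lemma sigmaWord_injective (w : List X) : Function.Injective (S.sigmaWord w) := by
  induction w with
  | nil => exact Function.injective_id
  | cons c w ih => exact fun x y h => ih ((S.σ c).injective h)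

lemma tauWord_injective (w : List X) : Function.Injective (S.tauWord w) := by
  induction w with
  | nil => exact Function.injective_id
  | cons c w ih => exact fun x y h => (S.τ c).injective (ih h)

lemma sigmaWord_eq_of_step {x y : List X} (h : S.Step x y) : S.sigmaWord x = S.sigmaWord y := by
  obtain ⟨u, v, p, q, rfl, rfl⟩ := h
  funext z
  simp only [sigmaWord_append, sigmaWord_cons, sigma_braid]

lemma tauWord_eq_of_step {x y : List X} (h : S.Step x y) : S.tauWord x = S.tauWord y := by
  obtain ⟨u, v, p, q, rfl, rfl⟩ := h
  funext z
  simp only [tauWord_append, tauWord_cons, tau_braid]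

lemma sigmaWord_eq_of_eqvGen {x y : List X} (h : Relation.EqvGen S.Step x y) :
    S.sigmaWord x = S.sigmaWord y :=
  congrArg (Quot.lift S.sigmaWord fun _ _ => S.sigmaWord_eq_of_step) (Quot.eqvGen_sound h)

lemma tauWord_eq_of_eqvGen {x y : List X} (h : Relation.EqvGen S.Step x y) :
    S.tauWord x = S.tauWord y :=
  congrArg (Quot.lift S.tauWord fun _ _ => S.tauWord_eq_of_step) (Quot.eqvGen_sound h)

lemma eqvGen_append {x y : List X} (u v : List X) (h : Relation.EqvGen S.Step x y) :
    Relation.EqvGen S.Step (u ++ x ++ v) (u ++ y ++ v) := by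
  refine Quot.eqvGen_exact (congrArg (Quot.lift (fun w => Quot.mk S.Step (u ++ w ++ v)) ?_)
    (Quot.eqvGen_sound h))
  rintro _ _ ⟨u', v', p, q, rfl, rfl⟩
  exact Quot.sound ⟨u ++ u', v' ++ v, p, q, by simp, by simp⟩

lemma tauWord_D_sigmaWord (w : List X) (z : X) : S.tauWord w (S.D (S.sigmaWord w z)) = S.D z := by
  induction w generalizing z with
  | nil => rfl
  | cons c w ih => rw [sigmaWord_cons, tauWord_cons, tau_D_sigma, ih]

@[simp] lemma Psi_zero (a : X) : S.Psi 0 a = [] := rfl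

lemma Psi_succ (l : ℕ) (a : X) : S.Psi (l + 1) a = S.D^[l] a :: S.Psi l a := by
  simp only [Psi, List.range_succ_eq_map, List.map_cons, List.map_map]
  refine congrArg₂ List.cons (by simp) (List.map_congr_left fun t ht => ?_)
  rw [List.mem_range] at ht
  simp only [Function.comp_apply]
  congr 1
  omega

lemma Psi_succ' (l : ℕ) (a : X) : S.Psi (l + 1) a = S.Psi l (S.D a) ++ [a] := by
  simp only [Psi, List.range_succ, List.map_append, List.map_cons, List.map_nil]
  refine congrArg₂ (· ++ ·) (List.map_congr_left fun t ht => ?_) (by simp)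
  rw [List.mem_range] at ht
  rw [← Function.iterate_succ_apply]
  congr 1
  omega

lemma PsiNeg_succ [Nonempty X] (l : ℕ) (c : X) :
    S.PsiNeg (l + 1) c = c :: S.PsiNeg l (S.Dinv c) := by
  simp only [PsiNeg, List.range_succ_eq_map, List.map_cons, List.map_map]
  exact congrArg₂ List.cons rfl (List.map_congr_left fun t _ => Function.iterate_succ_apply _ _ _)

lemma PsiNeg_eq_Psi [Nonempty X] (l : ℕ) (c : X) :
    S.PsiNeg l c = S.Psi l (S.Dinv^[l - 1] c) := by
  refine List.map_congr_left fun t ht => ?_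
  rw [List.mem_range] at ht
  have h : S.Dinv^[l - 1] c = S.Dinv^[l - 1 - t] (S.Dinv^[t] c) := by
    rw [← Function.iterate_add_apply]
    congr 1
    omega
  rw [h, D_iterate_Dinv_iterate]

lemma tauWord_Psi_D_iterate (l : ℕ) (a : X) : S.tauWord (S.Psi l a) (S.D^[l] a) = a := by
  induction l with
  | zero => rfl
  | succ l ih => rw [Psi_succ, tauWord_cons, Function.iterate_succ_apply', tau_D, ih]

lemma tauWord_Psi_eq_self_iff (l : ℕ) (a x : X) :
    S.tauWord (S.Psi l a) x = a ↔ x = S.D^[l] a :=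
  (S.tauWord_injective _).eq_iff' (S.tauWord_Psi_D_iterate l a)

lemma sigmaWord_Psi_D (l : ℕ) (a : X) : S.sigmaWord (S.Psi l (S.D a)) a = S.D^[l] a := by
  induction l generalizing a with
  | zero => rfl
  | succ l ih =>
    rw [Psi_succ', sigmaWord_append, sigmaWord_cons, sigmaWord_nil, sigma_D_self, ih,
      ← Function.iterate_succ_apply, Function.iterate_succ_apply']

lemma sigmaWord_Psi_succ_Dinv [Nonempty X] (l : ℕ) (a : X) :
    S.sigmaWord (S.Psi (l + 1) a) (S.Dinv a) = S.D^[l] a := by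
  rw [Psi_succ', sigmaWord_append, sigmaWord_cons, sigmaWord_nil, sigma_Dinv, sigmaWord_Psi_D]

lemma tau_sigmaWord_Psi (l : ℕ) (a z : X) :
    S.τ (S.sigmaWord (S.Psi l a) z) (S.D^[l] a) = S.D^[l] (S.τ z a) := by
  induction l with
  | zero => rfl
  | succ l ih =>
    rw [Psi_succ, sigmaWord_cons, Function.iterate_succ_apply', Function.iterate_succ_apply',
      tau_sigma_D, ih]

lemma D_sigmaWord_Psi_tau_D (l : ℕ) (a c : X) :
    S.D (S.sigmaWord (S.Psi l (S.τ (S.D c) a)) c) = S.sigmaWord (S.Psi l a) (S.D c) := by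
  induction l generalizing a with
  | zero => rfl
  | succ l ih =>
    rw [Psi_succ, Psi_succ, sigmaWord_cons, sigmaWord_cons, ← tau_sigmaWord_Psi, ← ih,
      D_sigma_tau_D]

lemma Psi_append_singleton_eqvGen (l : ℕ) (a z : X) :
    Relation.EqvGen S.Step (S.Psi l a ++ [z])
      (S.sigmaWord (S.Psi l a) z :: S.Psi l (S.τ z a)) := by
  induction l with
  | zero => exact .refl _
  | succ l ih =>
    have hstep : S.Step (S.D^[l] a :: S.sigmaWord (S.Psi l a) z :: S.Psi l (S.τ z a))
        (S.sigmaWord (S.Psi (l + 1) a) z :: S.Psi (l + 1) (S.τ z a)) :=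
      ⟨[], _, _, _, rfl, by rw [Psi_succ, Psi_succ, sigmaWord_cons, tau_sigmaWord_Psi]; rfl⟩
    have hpush : Relation.EqvGen S.Step (S.Psi (l + 1) a ++ [z])
        (S.D^[l] a :: S.sigmaWord (S.Psi l a) z :: S.Psi l (S.τ z a)) := by
      rw [Psi_succ]
      simpa using S.eqvGen_append [S.D^[l] a] [] ih
    exact hpush.trans _ _ _ (.rel _ _ hstep)

lemma Psi_append_Psi_eqvGen [Nonempty X] (l j : ℕ) (a b : X) :
    Relation.EqvGen S.Step (S.Psi l a ++ S.Psi (j + 1) b)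
      (S.PsiNeg (j + 1) (S.sigmaWord (S.Psi l a) (S.D^[j] b)) ++
        S.Psi l (S.tauWord (S.Psi (j + 1) b) a)) := by
  induction j generalizing a with
  | zero => simpa [Psi_succ, PsiNeg_succ, PsiNeg] using S.Psi_append_singleton_eqvGen l a b
  | succ j ih =>
    have hDinv : S.Dinv (S.sigmaWord (S.Psi l a) (S.D^[j + 1] b)) =
        S.sigmaWord (S.Psi l (S.τ (S.D^[j + 1] b) a)) (S.D^[j] b) := by
      rw [Function.iterate_succ_apply', ← D_sigmaWord_Psi_tau_D, Dinv_D]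
    have h1 := S.eqvGen_append [] (S.Psi (j + 1) b)
      (S.Psi_append_singleton_eqvGen l a (S.D^[j + 1] b))
    have h2 := S.eqvGen_append [S.sigmaWord (S.Psi l a) (S.D^[j + 1] b)] []
      (ih (S.τ (S.D^[j + 1] b) a))
    rw [Psi_succ _ (j + 1) b, PsiNeg_succ, hDinv, tauWord_cons]
    simp only [List.nil_append, List.append_nil, List.append_assoc, List.cons_append] at h1 h2 ⊢
    exact h1.trans _ _ _ h2

section Exchange

variable [Nonempty X]

noncomputable def exchangeLeft (l : ℕ) (A B : X) : X :=
  S.Dinv^[l - 1] (S.sigmaWord (S.Psi l A) (S.D^[l - 1] B))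

def exchangeRight (l : ℕ) (A B : X) : X := S.tauWord (S.Psi l B) A

variable (m : ℕ) (A B : X)

lemma exchangeLeft_succ :
    S.exchangeLeft (m + 1) A B = S.Dinv^[m] (S.sigmaWord (S.Psi (m + 1) A) (S.D^[m] B)) := rfl

lemma Psi_append_Psi_eqvGen_exchange :
    Relation.EqvGen S.Step (S.Psi (m + 1) A ++ S.Psi (m + 1) B)
      (S.Psi (m + 1) (S.exchangeLeft (m + 1) A B) ++
        S.Psi (m + 1) (S.exchangeRight (m + 1) A B)) := by
  have h := S.Psi_append_Psi_eqvGen (m + 1) m A B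
  rwa [PsiNeg_eq_Psi] at h

lemma tauWord_exchange (z : X) :
    S.tauWord (S.Psi (m + 1) (S.exchangeRight (m + 1) A B))
        (S.tauWord (S.Psi (m + 1) (S.exchangeLeft (m + 1) A B)) z) =
      S.tauWord (S.Psi (m + 1) B) (S.tauWord (S.Psi (m + 1) A) z) := by
  simpa using congrFun (S.tauWord_eq_of_eqvGen (S.Psi_append_Psi_eqvGen_exchange m A B)).symm z

lemma sigmaWord_Psi_exchangeRight_Dinv :
    S.sigmaWord (S.Psi (m + 1) (S.exchangeRight (m + 1) A B)) (S.Dinv B) =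
      S.Dinv (S.exchangeLeft (m + 1) A B) := by
  apply S.sigmaWord_injective (S.Psi (m + 1) (S.exchangeLeft (m + 1) A B))
  rw [← sigmaWord_append, ← S.sigmaWord_eq_of_eqvGen (S.Psi_append_Psi_eqvGen_exchange m A B),
    sigmaWord_append, sigmaWord_Psi_succ_Dinv, sigmaWord_Psi_succ_Dinv, exchangeLeft_succ,
    D_iterate_Dinv_iterate]

lemma tauWord_Psi_exchangeRight_exchangeLeft :
    S.tauWord (S.Psi (m + 1) (S.exchangeRight (m + 1) A B)) (S.exchangeLeft (m + 1) A B) = B := by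
  rw [← S.D_Dinv (S.exchangeLeft (m + 1) A B), ← sigmaWord_Psi_exchangeRight_Dinv,
    tauWord_D_sigmaWord, D_Dinv]

variable {m A B}

lemma eq_Dinv_iterate_of_exchangeLeft_eq {g : X}
    (h : S.exchangeLeft (m + 1) A B = S.Dinv^[m + 1] g) :
    B = S.Dinv^[m + 1] (S.tauWord (S.Psi (m + 1) A) g) := by
  rw [exchangeLeft_succ, Function.iterate_succ_apply, Dinv_iterate_eq_iff,
    D_iterate_Dinv_iterate] at h
  rw [eq_comm, Dinv_iterate_eq_iff, ← S.D_Dinv g, ← h, tauWord_D_sigmaWord,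
    Function.iterate_succ_apply']

lemma eq_Dinv_iterate_of_exchangeRight_eq {g : X}
    (h : S.exchangeRight (m + 1) A B =
      S.Dinv^[m + 1] (S.tauWord (S.Psi (m + 1) (S.exchangeLeft (m + 1) A B)) g)) :
    A = S.Dinv^[m + 1] g := by
  rw [eq_comm, Dinv_iterate_eq_iff] at h
  have h' := S.tauWord_Psi_D_iterate (m + 1) (S.exchangeRight (m + 1) A B)
  rw [← h, tauWord_exchange] at h'
  rw [(S.tauWord_Psi_eq_self_iff _ _ _).1 (S.tauWord_injective _ h'), Dinv_iterate_D_iterate]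

lemma eq_Dinv_iterate_of_exchangeRight_eq_exchangeLeft
    (h : S.exchangeRight (m + 1) A B = S.Dinv^[m + 1] (S.exchangeLeft (m + 1) A B)) :
    B = S.Dinv^[m + 1] A := by
  rw [eq_comm, Dinv_iterate_eq_iff] at h
  have h' := S.sigmaWord_Psi_exchangeRight_Dinv m A B
  rw [h, Function.iterate_succ_apply', Dinv_D,
    ← S.sigmaWord_Psi_succ_Dinv m (S.exchangeRight (m + 1) A B)] at h'
  have hB : S.exchangeRight (m + 1) A B = B := by
    simpa using congrArg S.D (S.sigmaWord_injective _ h').symm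
  rw [eq_comm, Dinv_iterate_eq_iff, ← S.tauWord_Psi_eq_self_iff]
  exact hB

end Exchange

section Blocks

variable {k : ℕ} (L : Fin k → ℕ)

lemma midword_congr {c c' : Fin k → X} {p q : Fin k} (h : ∀ t, p < t → t < q → c t = c' t) :
    S.midword L c p q = S.midword L c' p q := by
  unfold midword
  congr 1
  refine List.ext_getElem (by simp) fun n h₁ _ => ?_
  simp only [List.length_take, List.length_drop, List.length_ofFn, lt_min_iff] at h₁
  simp only [List.getElem_take, List.getElem_drop, List.getElem_ofFn]
  rw [h _ (by simp only [Fin.lt_def]; omega) (by simp only [Fin.lt_def]; omega)]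

lemma midword_split (c : Fin k → X) {p r q : Fin k} (hpr : p < r) (hrq : r < q) :
    S.midword L c p q = S.midword L c p r ++ S.Psi (L r) (c r) ++ S.midword L c r q := by
  unfold midword
  have hr : (r : ℕ) < (List.ofFn fun t => S.Psi (L t) (c t)).length := by simp
  rw [show (q : ℕ) - p - 1 = (r - p - 1) + ((q - r - 1) + 1) by omega, List.take_add,
    List.drop_drop, show (p : ℕ) + 1 + (r - p - 1) = r by omega, List.drop_eq_getElem_cons hr,
    List.take_succ_cons, List.flatten_append, List.flatten_cons, List.getElem_ofFn,
    List.append_assoc]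

lemma midword_eq_nil (c : Fin k → X) {p q : Fin k} (h : (q : ℕ) = p + 1) :
    S.midword L c p q = [] := by
  simp [midword, h]

lemma midword_succ_right (c : Fin k → X) {p i j : Fin k} (hij : (j : ℕ) = i + 1) (hp : p < i) :
    S.midword L c p j = S.midword L c p i ++ S.Psi (L i) (c i) := by
  rw [S.midword_split L c hp (by omega : i < j), S.midword_eq_nil L c hij, List.append_nil]

lemma midword_succ_left (c : Fin k → X) {i j q : Fin k} (hij : (j : ℕ) = i + 1) (hq : j < q) :
    S.midword L c i q = S.Psi (L j) (c j) ++ S.midword L c j q := by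
  rw [S.midword_split L c (by omega : i < j) hq, S.midword_eq_nil L c hij, List.nil_append]

lemma eqvGen_flatten_ofFn {F G : Fin k → List X} {i j : Fin k} (hij : (j : ℕ) = i + 1)
    (hFG : ∀ t, t ≠ i → t ≠ j → F t = G t)
    (h : Relation.EqvGen S.Step (F i ++ F j) (G i ++ G j)) :
    Relation.EqvGen S.Step (List.ofFn F).flatten (List.ofFn G).flatten := by
  obtain ⟨j, hj⟩ := j
  obtain rfl : j = i + 1 := hij
  have hsplit : ∀ H : Fin k → List X, (List.ofFn H).flatten =
      ((List.ofFn H).take i).flatten ++ (H i ++ H ⟨i + 1, hj⟩) ++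
        ((List.ofFn H).drop (i + 2)).flatten := by
    intro H
    conv_lhs => rw [← List.take_append_drop i (List.ofFn H)]
    rw [List.drop_eq_getElem_cons (by simp), List.drop_eq_getElem_cons (by simpa using hj)]
    simp only [List.getElem_ofFn, List.flatten_append, List.flatten_cons, List.append_assoc]
  have htake : (List.ofFn F).take i = (List.ofFn G).take i :=
    List.ext_getElem (by simp) fun n h₁ _ => by
      have hn : n < i := by simp only [List.length_take, List.length_ofFn] at h₁; omega
      simp only [List.getElem_take, List.getElem_ofFn]
      exact hFG _ (by simp [Fin.ext_iff]; omega) (by simp [Fin.ext_iff]; omega)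
  have hdrop : (List.ofFn F).drop (i + 2) = (List.ofFn G).drop (i + 2) :=
    List.ext_getElem (by simp) fun n h₁ _ => by
      simp only [List.getElem_drop, List.getElem_ofFn]
      exact hFG _ (by simp [Fin.ext_iff]; omega) (by simp [Fin.ext_iff]; omega)
  rw [hsplit F, hsplit G, htake, hdrop]
  exact S.eqvGen_append _ _ h

end Blocks

section ExchangeFamily

variable [Nonempty X] {k : ℕ}

noncomputable def exchangeFamily (l : ℕ) (a : Fin k → X) (i j : Fin k) : Fin k → X :=
  fun t => if t = i then S.exchangeLeft l (a i) (a j)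
    else if t = j then S.exchangeRight l (a i) (a j) else a t

def LambdaCond (L : Fin k → ℕ) (c : Fin k → X) (p q : Fin k) : Prop :=
  c q ≠ S.Dinv^[L q] (S.tauWord (S.midword L c p q) (c p))

variable {S} {L : Fin k → ℕ} {a : Fin k → X} {i j : Fin k} {l m : ℕ}

lemma exchangeFamily_left : S.exchangeFamily l a i j i = S.exchangeLeft l (a i) (a j) :=
  if_pos rfl

lemma exchangeFamily_right (hij : i < j) :
    S.exchangeFamily l a i j j = S.exchangeRight l (a i) (a j) := by
  simp [exchangeFamily, hij.ne']

lemma exchangeFamily_of_ne {t : Fin k} (hti : t ≠ i) (htj : t ≠ j) :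
    S.exchangeFamily l a i j t = a t := by
  simp [exchangeFamily, hti, htj]

lemma midword_exchangeFamily_of_le {p q : Fin k} (hij : i < j) (hq : q ≤ i) :
    S.midword L (S.exchangeFamily l a i j) p q = S.midword L a p q :=
  S.midword_congr L fun _ _ ht => exchangeFamily_of_ne (by omega) (by omega)

lemma midword_exchangeFamily_of_ge {p q : Fin k} (hij : i < j) (hp : j ≤ p) :
    S.midword L (S.exchangeFamily l a i j) p q = S.midword L a p q :=
  S.midword_congr L fun _ ht _ => exchangeFamily_of_ne (by omega) (by omega)

lemma LambdaCond.exchangeFamily_left_of_lt (hij : (j : ℕ) = i + 1) (hLi : L i = m + 1)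
    (hLj : L j = m + 1) {p : Fin k} (hp : p < i) (h : S.LambdaCond L a p j) :
    S.LambdaCond L (S.exchangeFamily (m + 1) a i j) p i := by
  rw [LambdaCond, exchangeFamily_left, exchangeFamily_of_ne hp.ne (by omega),
    midword_exchangeFamily_of_le (by omega) le_rfl, hLi]
  rw [LambdaCond, S.midword_succ_right L a hij hp, tauWord_append, hLi, hLj] at h
  exact fun h' => h (S.eq_Dinv_iterate_of_exchangeLeft_eq h')

lemma LambdaCond.exchangeFamily_right_of_lt (hij : (j : ℕ) = i + 1) (hLi : L i = m + 1)
    (hLj : L j = m + 1) {p : Fin k} (hp : p < i) (h : S.LambdaCond L a p i) :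
    S.LambdaCond L (S.exchangeFamily (m + 1) a i j) p j := by
  rw [LambdaCond, exchangeFamily_right (by omega), exchangeFamily_of_ne hp.ne (by omega),
    S.midword_succ_right L _ hij hp, midword_exchangeFamily_of_le (by omega) le_rfl,
    tauWord_append, exchangeFamily_left, hLi, hLj]
  rw [LambdaCond, hLi] at h
  exact fun h' => h (S.eq_Dinv_iterate_of_exchangeRight_eq h')

lemma LambdaCond.exchangeFamily_left_right (hij : (j : ℕ) = i + 1) (hLj : L j = m + 1)
    (h : S.LambdaCond L a i j) : S.LambdaCond L (S.exchangeFamily (m + 1) a i j) i j := by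
  rw [LambdaCond, exchangeFamily_left, exchangeFamily_right (by omega),
    S.midword_eq_nil L _ hij, tauWord_nil, hLj]
  rw [LambdaCond, S.midword_eq_nil L _ hij, tauWord_nil, hLj] at h
  exact fun h' => h (S.eq_Dinv_iterate_of_exchangeRight_eq_exchangeLeft h')

lemma LambdaCond.exchangeFamily_left_of_gt (hij : (j : ℕ) = i + 1) (hLj : L j = m + 1)
    {q : Fin k} (hq : j < q) (h : S.LambdaCond L a j q) :
    S.LambdaCond L (S.exchangeFamily (m + 1) a i j) i q := by
  rw [LambdaCond, exchangeFamily_of_ne (by omega) hq.ne', S.midword_succ_left L _ hij hq,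
    midword_exchangeFamily_of_ge (by omega) le_rfl, tauWord_append, exchangeFamily_left,
    exchangeFamily_right (by omega), hLj, tauWord_Psi_exchangeRight_exchangeLeft]
  exact h

lemma LambdaCond.exchangeFamily_right_of_gt (hij : (j : ℕ) = i + 1) (hLj : L j = m + 1)
    {q : Fin k} (hq : j < q) (h : S.LambdaCond L a i q) :
    S.LambdaCond L (S.exchangeFamily (m + 1) a i j) j q := by
  rw [LambdaCond, exchangeFamily_of_ne (by omega) hq.ne', exchangeFamily_right (by omega),
    midword_exchangeFamily_of_ge (by omega) le_rfl]
  rw [LambdaCond, S.midword_succ_left L a hij hq, tauWord_append, hLj] at h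
  exact h

lemma LambdaCond.exchangeFamily_of_ne_of_ne (hij : (j : ℕ) = i + 1) (hLi : L i = m + 1)
    (hLj : L j = m + 1) {p q : Fin k} (hpi : p ≠ i) (hpj : p ≠ j) (hqi : q ≠ i)
    (hqj : q ≠ j)
    (h : S.LambdaCond L a p q) : S.LambdaCond L (S.exchangeFamily (m + 1) a i j) p q := by
  rw [LambdaCond, exchangeFamily_of_ne hpi hpj, exchangeFamily_of_ne hqi hqj]
  by_cases hpq : p < i ∧ j < q
  · rw [S.midword_split L _ (by omega : p < j) hpq.2, S.midword_succ_right L _ hij hpq.1,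
      midword_exchangeFamily_of_le (by omega) le_rfl,
      midword_exchangeFamily_of_ge (by omega) le_rfl,
      exchangeFamily_left, exchangeFamily_right (by omega), hLi, hLj]
    rw [LambdaCond, S.midword_split L _ (by omega : p < j) hpq.2,
      S.midword_succ_right L _ hij hpq.1, hLi, hLj] at h
    simp only [tauWord_append] at h ⊢
    rwa [tauWord_exchange]
  · rwa [S.midword_congr L fun t hpt htq => exchangeFamily_of_ne (by omega) (by omega)]

lemma IsLambdaFamily.exchangeFamily (hfam : S.IsLambdaFamily L a) (hij : (j : ℕ) = i + 1)
    (hLi : L i = m + 1) (hLj : L j = m + 1) :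
    S.IsLambdaFamily L (S.exchangeFamily (m + 1) a i j) := by
  have hloc : ∀ t : Fin k, t < i ∨ t = i ∨ t = j ∨ j < t := fun t => by omega
  intro p q hpq
  rcases hloc p with hp | rfl | rfl | hp
  · rcases hloc q with hq | rfl | rfl | hq
    · exact LambdaCond.exchangeFamily_of_ne_of_ne hij hLi hLj (by omega) (by omega)
        (by omega) (by omega) (hfam p q hpq)
    · exact LambdaCond.exchangeFamily_left_of_lt hij hLi hLj hp (hfam p j (by omega))
    · exact LambdaCond.exchangeFamily_right_of_lt hij hLi hLj hp (hfam p i hp)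
    · exact LambdaCond.exchangeFamily_of_ne_of_ne hij hLi hLj (by omega) (by omega)
        (by omega) (by omega) (hfam p q hpq)
  · obtain rfl | hq : q = j ∨ j < q := by omega
    · exact LambdaCond.exchangeFamily_left_right hij hLj (hfam p q hpq)
    · exact LambdaCond.exchangeFamily_left_of_gt hij hLj hq (hfam j q hq)
  · exact LambdaCond.exchangeFamily_right_of_gt hij hLj hpq (hfam i q (by omega))
  · exact LambdaCond.exchangeFamily_of_ne_of_ne hij hLi hLj (by omega) (by omega)
      (by omega) (by omega) (hfam p q hpq)

variable (S)

lemma word_exchangeFamily_eqvGen (hij : (j : ℕ) = i + 1) (hLi : L i = m + 1)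
    (hLj : L j = m + 1) :
    Relation.EqvGen S.Step (S.word L a) (S.word L (S.exchangeFamily (m + 1) a i j)) := by
  refine S.eqvGen_flatten_ofFn hij (fun t hti htj => by rw [exchangeFamily_of_ne hti htj]) ?_
  rw [exchangeFamily_left, exchangeFamily_right (by omega), hLi, hLj]
  exact S.Psi_append_Psi_eqvGen_exchange m (a i) (a j)

lemma flatten_ofFn_exchange_eq_word (L : Fin k → ℕ) (a : Fin k → X) (i : ℕ) (hi : i + 1 < k)
    {l : ℕ} (hl1 : L ⟨i, Nat.lt_of_succ_lt hi⟩ = l) (hl2 : L ⟨i + 1, hi⟩ = l) :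
    (List.ofFn fun t : Fin k =>
        if (t : ℕ) = i then
          S.PsiNeg l
            (S.sigmaWord (S.Psi l (a ⟨i, Nat.lt_of_succ_lt hi⟩)) (S.D^[l - 1] (a ⟨i + 1, hi⟩)))
        else if (t : ℕ) = i + 1 then
          S.Psi l (S.tauWord (S.Psi l (a ⟨i + 1, hi⟩)) (a ⟨i, Nat.lt_of_succ_lt hi⟩))
        else S.Psi (L t) (a t)).flatten =
      S.word L (S.exchangeFamily l a ⟨i, Nat.lt_of_succ_lt hi⟩ ⟨i + 1, hi⟩) := by
  refine congrArg (fun F => (List.ofFn F).flatten) (funext fun t => ?_)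
  simp only [exchangeFamily, Fin.ext_iff]
  split_ifs with h1 h2
  · obtain rfl : t = ⟨i, Nat.lt_of_succ_lt hi⟩ := Fin.ext h1
    rw [hl1, PsiNeg_eq_Psi]
    rfl
  · obtain rfl : t = ⟨i + 1, hi⟩ := Fin.ext h2
    rw [hl2]
    rfl
  · rfl

end ExchangeFamily

end NDIS

theorem exchange_preserves_lambda_element {X : Type*} [Nonempty X]
    (S : NDIS X) {k : ℕ} (L : Fin k → ℕ)
    (i : ℕ) (hi : i + 1 < k) (l : ℕ) (hlpos : 0 < l)
    (hl1 : L ⟨i, by omega⟩ = l) (hl2 : L ⟨i + 1, hi⟩ = l)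
    (a : Fin k → X) (hfam : S.IsLambdaFamily L a) :
    S.IsLambdaWord L
      ((List.ofFn fun t : Fin k =>
          if (t : ℕ) = i then
            S.PsiNeg l (S.sigmaWord (S.Psi l (a ⟨i, by omega⟩)) (S.D^[l - 1] (a ⟨i + 1, hi⟩)))
          else if (t : ℕ) = i + 1 then
            S.Psi l (S.tauWord (S.Psi l (a ⟨i + 1, hi⟩)) (a ⟨i, by omega⟩))
          else S.Psi (L t) (a t)).flatten) ∧
    ((List.ofFn fun t : Fin k =>
        if (t : ℕ) = i then
          S.PsiNeg l (S.sigmaWord (S.Psi l (a ⟨i, by omega⟩)) (S.D^[l - 1] (a ⟨i + 1, hi⟩)))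
        else if (t : ℕ) = i + 1 then
          S.Psi l (S.tauWord (S.Psi l (a ⟨i + 1, hi⟩)) (a ⟨i, by omega⟩))
        else S.Psi (L t) (a t)).flatten) ∈ S.Orb (S.word L a) := by
  rw [S.flatten_ofFn_exchange_eq_word L a i hi hl1 hl2]
  obtain ⟨m, rfl⟩ := Nat.exists_eq_add_one_of_ne_zero hlpos.ne'
  exact ⟨⟨_, rfl, hfam.exchangeFamily rfl hl1 hl2⟩,
    S.word_exchangeFamily_eqvGen rfl hl1 hl2⟩
end
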